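/- arXiv:1309.7967 — 5 statements merged into one kernel-verified Lean document; each statement's English description precedes it below -/
import Mathlib

section
/- Let n ≥ 3 and x ∈ 𝒳^n. For each l ∈ {1, ..., n-1}, the equalities x_l = x_{l+1} and x_1···x_l = x_{l+1} + ... + x_n cannot hold simultaneously. -/
/-- Membership in the set `𝒳^n`: `x 1 + ⋯ + x n = 1`, `1 ≥ x 1 ≥ ⋯ ≥ x n ≥ 0`, and
the product-sum inequalities `x 1 ⋯ x j ≤ x (j+1) + ⋯ + x n` for `1 ≤ j ≤ n-1`. -/
def memChi (n : ℕ) (x : ℕ → ℝ) : Prop :=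
  (∑ i ∈ Finset.Icc 1 n, x i = 1) ∧ x 1 ≤ 1 ∧
  (∀ i, 1 ≤ i → i < n → x (i + 1) ≤ x i) ∧ 0 ≤ x n ∧
  (∀ j, 1 ≤ j → j ≤ n - 1 →
    (∏ i ∈ Finset.Icc 1 j, x i) ≤ ∑ i ∈ Finset.Icc (j + 1) n, x i)

/-!
Every coordinate of a point of `𝒳^n` is positive: a zero coordinate `x j` kills the tail sum from
`j`, so the constraint at `j - 1` forces a zero factor of `x 1 ⋯ x (j-1)`, hence `x (j-1) = 0`,
and descending to `x 1 = 0` contradicts `∑ x i = 1`. Since all coordinates lie in `[0, 1]`, the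
product `x 1 ⋯ x l` is at most each of its factors. If `l + 1 < n`, the tail sum from `l + 1`
is therefore strictly larger than `x (l+1) = x l ≥ x 1 ⋯ x l`. If `l = n - 1`, cancelling
`x (n-1) = x n > 0` in `x 1 ⋯ x (n-1) = x n` gives `x 1 ⋯ x (n-2) = 1`, so `x 1 ≥ 1`, which is
impossible because `x 1 + x n ≤ 1`.
-/

open Finset

lemma Finset.sum_Icc_eq_add_sum_Icc_add_one {M : Type*} [AddCommMonoid M] (f : ℕ → M)
    {a b : ℕ} (hab : a ≤ b) : ∑ k ∈ Icc a b, f k = f a + ∑ k ∈ Icc (a + 1) b, f k := by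
  rw [← insert_Icc_add_one_left_eq_Icc hab, sum_insert (by simp)]

lemma Finset.prod_le_of_mem_of_le_one {ι R : Type*} [CommMonoidWithZero R] [Preorder R]
    [ZeroLEOneClass R] [PosMulMono R] {s : Finset ι} {f : ι → R} {i : ι}
    (hi : i ∈ s) (h0 : ∀ k ∈ s, 0 ≤ f k) (h1 : ∀ k ∈ s, f k ≤ 1) : ∏ k ∈ s, f k ≤ f i := by
  simpa using prod_le_prod_of_subset_of_le_one (singleton_subset_iff.2 hi) h0 fun k hk _ ↦ h1 k hk

namespace memChi

variable {n : ℕ} {x : ℕ → ℝ}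

lemma antitoneOn (hx : memChi n x) : AntitoneOn x (Set.Icc 1 n) :=
  antitoneOn_of_add_one_le Set.ordConnected_Icc fun i _ hi hi' ↦ hx.2.2.1 i hi.1 hi'.2

lemma nonneg (hx : memChi n x) {i : ℕ} (hi : i ∈ Icc 1 n) : 0 ≤ x i := by
  rw [mem_Icc] at hi
  exact hx.2.2.2.1.trans (hx.antitoneOn hi ⟨hi.1.trans hi.2, le_rfl⟩ hi.2)

lemma le_one (hx : memChi n x) {i : ℕ} (hi : i ∈ Icc 1 n) : x i ≤ 1 := by
  rw [mem_Icc] at hi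
  exact (hx.antitoneOn ⟨le_rfl, hi.1.trans hi.2⟩ hi hi.1).trans hx.2.1

lemma prod_Icc_le (hx : memChi n x) {i j : ℕ} (hi : i ∈ Icc 1 j) (hj : j ≤ n) :
    ∏ k ∈ Icc 1 j, x k ≤ x i :=
  have hsub : Icc 1 j ⊆ Icc 1 n := Icc_subset_Icc le_rfl hj
  prod_le_of_mem_of_le_one hi (fun _ hk ↦ hx.nonneg (hsub hk)) fun _ hk ↦ hx.le_one (hsub hk)

lemma sum_Icc_eq_zero (hx : memChi n x) {i : ℕ} (hi : 1 ≤ i) (h : x i = 0) :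
    ∑ k ∈ Icc i n, x k = 0 := by
  refine sum_eq_zero fun k hk ↦ le_antisymm ?_ (hx.nonneg (Icc_subset_Icc hi le_rfl hk))
  rw [mem_Icc] at hk
  exact h ▸ hx.antitoneOn ⟨hi, hk.1.trans hk.2⟩ ⟨hi.trans hk.1, hk.2⟩ hk.1

lemma eq_zero_of_add_one_eq_zero (hx : memChi n x) {j : ℕ} (hj : 1 ≤ j) (hjn : j < n)
    (h : x (j + 1) = 0) : x j = 0 := by
  have hprod : ∏ k ∈ Icc 1 j, x k = 0 :=
    le_antisymm (hx.sum_Icc_eq_zero (by omega) h ▸ hx.2.2.2.2 j hj (by omega))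
      (prod_nonneg fun _ hk ↦ hx.nonneg (Icc_subset_Icc le_rfl hjn.le hk))
  obtain ⟨k, hk, hxk⟩ := prod_eq_zero_iff.1 hprod
  rw [mem_Icc] at hk
  refine le_antisymm ?_ (hx.nonneg (mem_Icc.2 ⟨hj, hjn.le⟩))
  exact hxk ▸ hx.antitoneOn ⟨hk.1, hk.2.trans hjn.le⟩ ⟨hj, hjn.le⟩ hk.2

lemma pos (hx : memChi n x) {i : ℕ} (hi : i ∈ Icc 1 n) : 0 < x i := by
  rw [mem_Icc] at hi
  refine (hx.nonneg (mem_Icc.2 hi)).lt_of_ne' fun h ↦ ?_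
  have hx1 : x 1 = 0 := by
    induction i, hi.1 using Nat.le_induction with
    | base => exact h
    | succ j hj ih => exact ih ⟨hj, by omega⟩ (hx.eq_zero_of_add_one_eq_zero hj (by omega) h)
  simpa [hx.sum_Icc_eq_zero le_rfl hx1] using hx.1

lemma sum_Icc_pos (hx : memChi n x) {i : ℕ} (hi : 1 ≤ i) (hin : i ≤ n) :
    0 < ∑ k ∈ Icc i n, x k :=
  sum_pos (fun _ hk ↦ hx.pos (Icc_subset_Icc hi le_rfl hk)) (nonempty_Icc.2 hin)

lemma apply_one_lt_one (hx : memChi n x) (hn : 2 ≤ n) : x 1 < 1 := by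
  have htail : 0 < ∑ k ∈ Icc (1 + 1) n, x k := hx.sum_Icc_pos one_le_two hn
  have hsum : x 1 + ∑ k ∈ Icc (1 + 1) n, x k = 1 :=
    sum_Icc_eq_add_sum_Icc_add_one x (by omega : 1 ≤ n) ▸ hx.1
  linarith

end memChi

/-- For `n ≥ 3`, `x ∈ 𝒳^n` and `1 ≤ l ≤ n-1`, the equalities `x l = x (l+1)` and `x 1 ⋯ x l = x (l+1) + ⋯ + x n` cannot hold simultaneously. -/
theorem chi_not_simultaneous_equality (n : ℕ) (hn : 3 ≤ n) (x : ℕ → ℝ)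
    (hx : memChi n x) :
    ∀ l, 1 ≤ l → l ≤ n - 1 →
      ¬ (x l = x (l + 1) ∧
        (∏ i ∈ Finset.Icc 1 l, x i) = ∑ i ∈ Finset.Icc (l + 1) n, x i) := by
  rintro l hl hln ⟨heq, hprod⟩
  rcases (by omega : l + 1 < n ∨ l + 1 = n) with hlt | rfl
  · have hprod_le : ∏ i ∈ Icc 1 l, x i ≤ x l := hx.prod_Icc_le (mem_Icc.2 ⟨hl, le_rfl⟩) (by omega)
    have hsplit := sum_Icc_eq_add_sum_Icc_add_one x hlt.le
    linarith [hx.sum_Icc_pos (by omega : 1 ≤ l + 1 + 1) hlt]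
  · obtain ⟨m, rfl⟩ : ∃ m, l = m + 1 := ⟨l - 1, by omega⟩
    have hxl : 0 < x (m + 1) := hx.pos (mem_Icc.2 ⟨hl, by omega⟩)
    have hprod_one : ∏ i ∈ Icc 1 m, x i = 1 := by
      rw [prod_Icc_succ_top (by omega), Icc_self, sum_singleton, ← heq] at hprod
      exact (mul_eq_right₀ hxl.ne').1 hprod
    have hx1 : 1 ≤ x 1 := hprod_one ▸ hx.prod_Icc_le (mem_Icc.2 ⟨le_rfl, by omega⟩) (by omega)
    exact (hx.apply_one_lt_one (by omega)).not_ge hx1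
end

section
/- Let n ≥ 3 and x ∈ 𝒳^n. If for some l ∈ {1, ..., n-1} the equality x_1···x_i = x_{i+1} + ... + x_n holds for every i ∈ {1, ..., l}, then x_i = 1/s_i for every i ∈ {1, ..., l}, where (s_i) is the Sylvester sequence. -/
open Finset

theorem sum_Icc_one_add_sum_Icc_succ {M : Type*} [AddCommMonoid M] (f : ℕ → M) {i n : ℕ}
    (h : i ≤ n) : ∑ j ∈ Icc 1 i, f j + ∑ j ∈ Icc (i + 1) n, f j = ∑ j ∈ Icc 1 n, f j := by
  simp only [Icc_add_one_left_eq_Ioc]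
  exact sum_Ioc_consecutive f (Nat.zero_le i) h

theorem inv_add_one_of_inv_mul_eq_inv_sub {P y : ℝ} (hP : 0 < P) (h : P⁻¹ * y = P⁻¹ - y) :
    y = (P + 1)⁻¹ := by
  refine eq_inv_of_mul_eq_one_left ?_
  field_simp at h
  linarith

section Sylvester

variable {s : ℕ → ℕ}

theorem sylvester_succ (hs1 : s 1 = 2)
    (hs : ∀ i, 2 ≤ i → s i = (∏ j ∈ Icc 1 (i - 1), s j) + 1) (i : ℕ) :
    s (i + 1) = (∏ j ∈ Icc 1 i, s j) + 1 := by
  rcases Nat.eq_zero_or_pos i with rfl | hi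
  · simp [hs1]
  · simpa using hs (i + 1) (by omega)

theorem sylvester_prod_pos (hs1 : s 1 = 2)
    (hs : ∀ i, 2 ≤ i → s i = (∏ j ∈ Icc 1 (i - 1), s j) + 1) (i : ℕ) :
    0 < ∏ j ∈ Icc 1 i, (s j : ℝ) := by
  refine prod_pos fun j hj => ?_
  obtain ⟨k, rfl⟩ := Nat.exists_eq_add_of_le' (mem_Icc.mp hj).1
  rw [sylvester_succ hs1 hs k]
  positivity

variable {x : ℕ → ℝ}

theorem eq_inv_sylvester_succ (hs1 : s 1 = 2)
    (hs : ∀ i, 2 ≤ i → s i = (∏ j ∈ Icc 1 (i - 1), s j) + 1) {i : ℕ}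
    (hi : ∏ j ∈ Icc 1 i, x j = 1 - ∑ j ∈ Icc 1 i, x j)
    (hi' : ∏ j ∈ Icc 1 (i + 1), x j = 1 - ∑ j ∈ Icc 1 (i + 1), x j)
    (hprod : ∏ j ∈ Icc 1 i, x j = (∏ j ∈ Icc 1 i, (s j : ℝ))⁻¹) :
    x (i + 1) = (s (i + 1) : ℝ)⁻¹ := by
  rw [prod_Icc_succ_top (by omega), sum_Icc_succ_top (by omega)] at hi'
  rw [sylvester_succ hs1 hs i]
  push_cast
  refine inv_add_one_of_inv_mul_eq_inv_sub (sylvester_prod_pos hs1 hs i) ?_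
  rw [← hprod]
  linarith

theorem prod_eq_inv_prod_sylvester (hs1 : s 1 = 2)
    (hs : ∀ i, 2 ≤ i → s i = (∏ j ∈ Icc 1 (i - 1), s j) + 1) {l : ℕ}
    (h : ∀ i ≤ l, ∏ j ∈ Icc 1 i, x j = 1 - ∑ j ∈ Icc 1 i, x j) :
    ∀ i ≤ l, ∏ j ∈ Icc 1 i, x j = (∏ j ∈ Icc 1 i, (s j : ℝ))⁻¹ := by
  intro i hi
  induction i with
  | zero => simp
  | succ i ih =>
    have hprod := ih (by omega)
    rw [prod_Icc_succ_top (by omega), prod_Icc_succ_top (by omega), mul_inv, hprod,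
      eq_inv_sylvester_succ hs1 hs (h i (by omega)) (h (i + 1) hi) hprod]

end Sylvester

theorem chi_equality_forces_sylvester_general (n : ℕ) (x : ℕ → ℝ)
    (hx : memChi n x) (s : ℕ → ℕ) (hs1 : s 1 = 2)
    (hs : ∀ i, 2 ≤ i → s i = (∏ j ∈ Finset.Icc 1 (i - 1), s j) + 1)
    (l : ℕ) (hl2 : l ≤ n - 1)
    (heq : ∀ i, 1 ≤ i → i ≤ l →
      (∏ j ∈ Finset.Icc 1 i, x j) = ∑ j ∈ Finset.Icc (i + 1) n, x j) :
    ∀ i, 1 ≤ i → i ≤ l → x i = 1 / (s i : ℝ) := by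
  have hprod : ∀ i ≤ l, ∏ j ∈ Icc 1 i, x j = 1 - ∑ j ∈ Icc 1 i, x j := by
    intro i hi
    rcases Nat.eq_zero_or_pos i with rfl | hi0
    · simp
    · rw [heq i hi0 hi, ← hx.1, ← sum_Icc_one_add_sum_Icc_succ x (by omega : i ≤ n)]
      ring
  intro i hi1 hil
  obtain ⟨k, rfl⟩ := Nat.exists_eq_add_of_le' hi1
  rw [one_div]
  exact eq_inv_sylvester_succ hs1 hs (hprod k (by omega)) (hprod (k + 1) hil)
    (prod_eq_inv_prod_sylvester hs1 hs hprod k (by omega))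

/-- For `n ≥ 3`, `x ∈ 𝒳^n`: if the product-sum inequalities are equalities for all `i ≤ l`, then `x i = 1 / s i` for all `i ≤ l` (`s` the Sylvester sequence). -/
theorem chi_equality_forces_sylvester (n : ℕ) (hn : 3 ≤ n) (x : ℕ → ℝ)
    (hx : memChi n x) (s : ℕ → ℕ) (hs1 : s 1 = 2)
    (hs : ∀ i, 2 ≤ i → s i = (∏ j ∈ Finset.Icc 1 (i - 1), s j) + 1)
    (l : ℕ) (hl1 : 1 ≤ l) (hl2 : l ≤ n - 1)
    (heq : ∀ i, 1 ≤ i → i ≤ l →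
      (∏ j ∈ Finset.Icc 1 i, x j) = ∑ j ∈ Finset.Icc (i + 1) n, x j) :
    ∀ i, 1 ≤ i → i ≤ l → x i = 1 / (s i : ℝ) :=
  chi_equality_forces_sylvester_general n x hx s hs1 hs l hl2 heq
end

section
/- Consider two sequences g_1 ≥ g_2 ≥ ... ≥ g_n > 0 and h_1 ≥ h_2 ≥ ... ≥ h_n > 0 of real numbers such that h_1···h_j ≤ g_1···g_j for every j ∈ {1, ..., n}. Then h_1 + ... + h_n ≤ g_1 + ... + g_n, with equality if and only if g_i = h_i for every i. -/
/-!
Put `dᵢ = log gᵢ - log hᵢ`. The hypothesis says exactly that the partial sums `d₁ + ⋯ + dⱼ`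
are nonnegative, so Abel summation against the decreasing positive weights `hᵢ` gives
`∑ hᵢ dᵢ ≥ 0`. On the other hand `log x ≤ x - 1`, applied to `x = gᵢ / hᵢ`, gives
`hᵢ dᵢ ≤ gᵢ - hᵢ`, strictly unless `gᵢ = hᵢ`. Summing, `0 ≤ ∑ hᵢ dᵢ ≤ ∑ gᵢ - ∑ hᵢ`.
-/

open Finset Real

namespace Real

lemma mul_log_sub_log_le_sub {x y : ℝ} (hx : 0 < x) (hy : 0 < y) :
    x * (log y - log x) ≤ y - x := by
  have := log_le_sub_one_of_pos (div_pos hy hx)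
  rw [log_div hy.ne' hx.ne'] at this
  calc x * (log y - log x) ≤ x * (y / x - 1) := mul_le_mul_of_nonneg_left this hx.le
    _ = y - x := by field_simp

lemma mul_log_sub_log_lt_sub {x y : ℝ} (hx : 0 < x) (hy : 0 < y) (hxy : x ≠ y) :
    x * (log y - log x) < y - x := by
  have := log_lt_sub_one_of_pos (div_pos hy hx) (by rwa [ne_eq, div_eq_one_iff_eq hx.ne', eq_comm])
  rw [log_div hy.ne' hx.ne'] at this
  calc x * (log y - log x) < x * (y / x - 1) := mul_lt_mul_of_pos_left this hx
    _ = y - x := by field_simp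

lemma sum_log_sub_log_nonneg_of_prod_le {ι : Type*} {s : Finset ι} {f g : ι → ℝ}
    (hf : ∀ i ∈ s, 0 < f i) (hg : ∀ i ∈ s, g i ≠ 0) (hfg : ∏ i ∈ s, f i ≤ ∏ i ∈ s, g i) :
    0 ≤ ∑ i ∈ s, (log (g i) - log (f i)) := by
  rw [sum_sub_distrib, ← log_prod hg, ← log_prod fun i hi ↦ (hf i hi).ne', sub_nonneg]
  exact log_le_log (prod_pos hf) hfg

end Real

section AbelSummation

variable {R : Type*} [CommRing R] [PartialOrder R] [IsOrderedRing R]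

lemma mul_sum_le_sum_mul_of_partial_sums_nonneg (n : ℕ) (w d : ℕ → R)
    (hw : ∀ i, 1 ≤ i → i < n → w (i + 1) ≤ w i)
    (hd : ∀ j, 1 ≤ j → j < n → 0 ≤ ∑ i ∈ Icc 1 j, d i) :
    w n * ∑ i ∈ Icc 1 n, d i ≤ ∑ i ∈ Icc 1 n, w i * d i := by
  induction n with
  | zero => simp
  | succ n ih =>
    have hstep : w (n + 1) * ∑ i ∈ Icc 1 n, d i ≤ w n * ∑ i ∈ Icc 1 n, d i := by
      rcases Nat.eq_zero_or_pos n with rfl | hn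
      · simp
      · exact mul_le_mul_of_nonneg_right (hw n hn n.lt_succ_self) (hd n hn n.lt_succ_self)
    rw [sum_Icc_succ_top (by omega), sum_Icc_succ_top (by omega), mul_add]
    gcongr ?_ + _
    exact hstep.trans (ih (fun i hi hin ↦ hw i hi (by omega)) fun j hj hjn ↦ hd j hj (by omega))

lemma sum_mul_nonneg_of_partial_sums_nonneg (n : ℕ) (w d : ℕ → R)
    (hw_nonneg : ∀ i, 1 ≤ i → i ≤ n → 0 ≤ w i)
    (hw : ∀ i, 1 ≤ i → i < n → w (i + 1) ≤ w i)
    (hd : ∀ j, 1 ≤ j → j ≤ n → 0 ≤ ∑ i ∈ Icc 1 j, d i) :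
    0 ≤ ∑ i ∈ Icc 1 n, w i * d i := by
  rcases Nat.eq_zero_or_pos n with rfl | hn
  · simp
  · exact (mul_nonneg (hw_nonneg n hn le_rfl) (hd n hn le_rfl)).trans
      (mul_sum_le_sum_mul_of_partial_sums_nonneg n w d hw fun j hj hjn ↦ hd j hj hjn.le)

end AbelSummation

theorem sum_le_sum_of_partial_prod_le_general (n : ℕ) (g h : ℕ → ℝ)
    (hgpos : ∀ i, 1 ≤ i → i ≤ n → 0 < g i)
    (hhpos : ∀ i, 1 ≤ i → i ≤ n → 0 < h i)
    (hhmono : ∀ i, 1 ≤ i → i < n → h (i + 1) ≤ h i)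
    (hprod : ∀ j, 1 ≤ j → j ≤ n →
      (∏ i ∈ Finset.Icc 1 j, h i) ≤ ∏ i ∈ Finset.Icc 1 j, g i) :
    (∑ i ∈ Finset.Icc 1 n, h i ≤ ∑ i ∈ Finset.Icc 1 n, g i) ∧
    ((∑ i ∈ Finset.Icc 1 n, h i = ∑ i ∈ Finset.Icc 1 n, g i) ↔
      ∀ i, 1 ≤ i → i ≤ n → g i = h i) := by
  have hgpos' : ∀ j ≤ n, ∀ i ∈ Icc 1 j, 0 < g i := fun j hjn i hi ↦
    hgpos i (mem_Icc.1 hi).1 ((mem_Icc.1 hi).2.trans hjn)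
  have hhpos' : ∀ j ≤ n, ∀ i ∈ Icc 1 j, 0 < h i := fun j hjn i hi ↦
    hhpos i (mem_Icc.1 hi).1 ((mem_Icc.1 hi).2.trans hjn)
  set d : ℕ → ℝ := fun i ↦ log (g i) - log (h i)
  have hweighted : 0 ≤ ∑ i ∈ Icc 1 n, h i * d i :=
    sum_mul_nonneg_of_partial_sums_nonneg n h d (fun i hi hin ↦ (hhpos i hi hin).le) hhmono
      fun j hj hjn ↦ sum_log_sub_log_nonneg_of_prod_le (hhpos' j hjn)
        (fun i hi ↦ (hgpos' j hjn i hi).ne') (hprod j hj hjn)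
  have hterm : ∀ i ∈ Icc 1 n, h i * d i ≤ g i - h i := fun i hi ↦
    mul_log_sub_log_le_sub (hhpos' n le_rfl i hi) (hgpos' n le_rfl i hi)
  have hgap : ∑ i ∈ Icc 1 n, h i * d i ≤ ∑ i ∈ Icc 1 n, g i - ∑ i ∈ Icc 1 n, h i := by
    rw [← sum_sub_distrib]
    exact sum_le_sum hterm
  refine ⟨by linarith, fun heq i hi hin ↦ ?_, fun hall ↦ ?_⟩
  · by_contra hne
    have := sum_lt_sum hterm
      ⟨i, mem_Icc.2 ⟨hi, hin⟩, mul_log_sub_log_lt_sub (hhpos i hi hin) (hgpos i hi hin) (Ne.symm hne)⟩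
    rw [sum_sub_distrib] at this
    linarith
  · exact sum_congr rfl fun i hi ↦ (hall i (mem_Icc.1 hi).1 (mem_Icc.1 hi).2).symm

/-- Soundararajan's proposition (a consequence of Muirhead's inequality): for two
decreasing sequences of positive reals `g 1 ≥ ⋯ ≥ g n > 0`, `h 1 ≥ ⋯ ≥ h n > 0`
with `h 1 ⋯ h j ≤ g 1 ⋯ g j` for every `j ≤ n`, one has
`h 1 + ⋯ + h n ≤ g 1 + ⋯ + g n`, with equality iff `g i = h i` for every `i`. -/
theorem sum_le_sum_of_partial_prod_le (n : ℕ) (g h : ℕ → ℝ)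
    (hgpos : ∀ i, 1 ≤ i → i ≤ n → 0 < g i)
    (hhpos : ∀ i, 1 ≤ i → i ≤ n → 0 < h i)
    (hgmono : ∀ i, 1 ≤ i → i < n → g (i + 1) ≤ g i)
    (hhmono : ∀ i, 1 ≤ i → i < n → h (i + 1) ≤ h i)
    (hprod : ∀ j, 1 ≤ j → j ≤ n →
      (∏ i ∈ Finset.Icc 1 j, h i) ≤ ∏ i ∈ Finset.Icc 1 j, g i) :
    (∑ i ∈ Finset.Icc 1 n, h i ≤ ∑ i ∈ Finset.Icc 1 n, g i) ∧
    ((∑ i ∈ Finset.Icc 1 n, h i = ∑ i ∈ Finset.Icc 1 n, g i) ↔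
      ∀ i, 1 ≤ i → i ≤ n → g i = h i) :=
  sum_le_sum_of_partial_prod_le_general n g h hgpos hhpos hhmono hprod
end

section
/- Let d ≥ 2 and let a_1, ..., a_d > 1 be real numbers with 1/a_1 + ... + 1/a_d = 1. Let S = conv({0, a_1 e_1, ..., a_d e_d}) ⊂ ℝ^d. Then for every v ∈ ℝ^d, the translate S + v contains no point of ℤ^d in its interior if and only if v ∈ ℤ^d. -/
/-! The simplex `S` is `{x ≥ 0 | ∑ xᵢ / aᵢ ≤ 1}`, so its interior is `{x > 0 | ∑ xᵢ / aᵢ < 1}`.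
A positive integer point has all coordinates `≥ 1`, hence `∑ xᵢ / aᵢ ≥ ∑ 1 / aᵢ = 1`: integral
translates of `S` are lattice-free. If `v` is not integral, the integer point `⌊v⌋ + 1` lies at
`1 - fract v` relative to `v`, a point of `(0, 1]^d` with a coordinate `< 1`, hence inside the
interior of `S + v`. -/

open Set

section

variable {ι : Type*}

lemma setOf_nonneg_and_le_eq_inter (f : (ι → ℝ) → ℝ) (c : ℝ) :
    {x : ι → ℝ | (∀ i, 0 ≤ x i) ∧ f x ≤ c} = (⋂ i, Function.eval i ⁻¹' Ici 0) ∩ f ⁻¹' Iic c := by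
  ext; simp

lemma convex_setOf_nonneg_and_le (f : (ι → ℝ) →ₗ[ℝ] ℝ) (c : ℝ) :
    Convex ℝ {x : ι → ℝ | (∀ i, 0 ≤ x i) ∧ f x ≤ c} := by
  rw [setOf_nonneg_and_le_eq_inter]
  exact (convex_iInter fun i => (convex_Ici 0).linear_preimage (LinearMap.proj i)).inter
    ((convex_Iic c).linear_preimage f)

variable [Fintype ι]

lemma interior_setOf_nonneg_and_le {f : (ι → ℝ) →ₗ[ℝ] ℝ} (hf : Function.Surjective f) (c : ℝ) :
    interior {x : ι → ℝ | (∀ i, 0 ≤ x i) ∧ f x ≤ c} = {x | (∀ i, 0 < x i) ∧ f x < c} := by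
  rw [setOf_nonneg_and_le_eq_inter, interior_inter, interior_iInter_of_finite,
    ← (f.isOpenMap_of_finiteDimensional hf).preimage_interior_eq_interior_preimage
      f.continuous_of_finiteDimensional]
  simp_rw [← (isOpenMap_eval _).preimage_interior_eq_interior_preimage (continuous_apply _),
    interior_Ici, interior_Iic]
  ext; simp

noncomputable def sumDiv (a : ι → ℝ) : (ι → ℝ) →ₗ[ℝ] ℝ := ∑ i, (a i)⁻¹ • LinearMap.proj i

@[simp] lemma sumDiv_apply (a x : ι → ℝ) : sumDiv a x = ∑ i, x i / a i := by
  simp [sumDiv, div_eq_inv_mul]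

variable {a : ι → ℝ}

lemma sumDiv_single [DecidableEq ι] {i : ι} (hi : a i ≠ 0) (t : ℝ) :
    sumDiv a (Pi.single i (t * a i)) = t := by
  simp [Pi.single_apply, ite_div, hi]

lemma sumDiv_surjective [DecidableEq ι] {i : ι} (hi : a i ≠ 0) :
    Function.Surjective (sumDiv a) :=
  fun t => ⟨_, sumDiv_single hi t⟩

lemma convexHull_insert_zero_range_single [DecidableEq ι] (ha : ∀ i, 0 < a i) :
    convexHull ℝ (insert 0 (range fun i => Pi.single i (a i))) =
      {x | (∀ i, 0 ≤ x i) ∧ sumDiv a x ≤ 1} := by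
  apply Subset.antisymm
  · refine convexHull_min ?_ (convex_setOf_nonneg_and_le _ _)
    rintro _ (rfl | ⟨i, rfl⟩)
    · simp
    · refine ⟨fun j => ?_, ?_⟩
      · by_cases h : j = i <;> simp [h, (ha i).le]
      · simpa using (sumDiv_single (ha i).ne' 1).le
  · rintro x ⟨hx0, hx1⟩
    rw [sumDiv_apply] at hx1
    -- weight `x i / a i` on the vertex `a i • e i`, the remaining weight on `0`
    let p : Option ι → ι → ℝ := fun o => o.elim 0 fun i => Pi.single i (a i)
    let w : Option ι → ℝ := fun o => o.elim (1 - ∑ i, x i / a i) fun i => x i / a i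
    have hmem := (convex_convexHull ℝ (insert 0 (range fun i => Pi.single i (a i)))).sum_mem
      (t := Finset.univ) (w := w) (z := p)
      (by rintro (_ | i) - <;> simp [w, hx1, div_nonneg (hx0 _) (ha _).le])
      (by simp [Fintype.sum_option, w])
      (by rintro (_ | i) - <;> simp [p, subset_convexHull ℝ _ (mem_insert _ _),
        subset_convexHull ℝ _ (mem_insert_of_mem _ (mem_range_self _))])
    convert hmem
    ext j
    simp [Fintype.sum_option, p, w, Pi.single_apply, (ha j).ne']

lemma intCast_notMem_of_sum_inv_eq_one (ha : ∀ i, 0 < a i) (hsum : ∑ i, 1 / a i = 1)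
    (z : ι → ℤ) : (fun i => (z i : ℝ)) ∉ {x | (∀ i, 0 < x i) ∧ sumDiv a x < 1} := by
  rintro ⟨hpos, hlt⟩
  refine hlt.not_ge ?_
  rw [sumDiv_apply, ← hsum]
  gcongr with i
  · exact (ha i).le
  · exact_mod_cast (Int.cast_pos.mp (hpos i) : 1 ≤ z i)

lemma one_sub_fract_mem_of_sum_inv_eq_one (ha : ∀ i, 0 < a i) (hsum : ∑ i, 1 / a i = 1)
    {v : ι → ℝ} {j : ι} (hj : Int.fract (v j) ≠ 0) :
    (fun i => 1 - Int.fract (v i)) ∈ {x | (∀ i, 0 < x i) ∧ sumDiv a x < 1} := by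
  refine ⟨fun i => sub_pos.mpr (Int.fract_lt_one _), ?_⟩
  rw [sumDiv_apply, ← hsum]
  refine Finset.sum_lt_sum (fun i _ => ?_) ⟨j, Finset.mem_univ j, ?_⟩
  · gcongr
    · exact (ha i).le
    · linarith [Int.fract_nonneg (v i)]
  · gcongr
    · exact ha j
    · linarith [(Int.fract_nonneg (v j)).lt_of_ne' hj]

end

lemma mem_interior_image_add_right {G : Type*} [TopologicalSpace G] [AddGroup G]
    [ContinuousAdd G] {s : Set G} {v y : G} :
    y ∈ interior ((· + v) '' s) ↔ y - v ∈ interior s := by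
  change y ∈ interior (Homeomorph.addRight v '' s) ↔ _
  rw [← (Homeomorph.addRight v).image_interior]
  simp [sub_eq_add_neg]

theorem translate_lattice_free_iff_integral_general (d : ℕ)
    (a : Fin d → ℝ) (ha : ∀ i, 1 < a i) (hsum : ∑ i, 1 / a i = 1)
    (S : Set (Fin d → ℝ))
    (hS : S = convexHull ℝ (insert (0 : Fin d → ℝ)
      (Set.range (fun i : Fin d => fun j => if j = i then a i else 0)))) :
    ∀ v : Fin d → ℝ,
      (∀ q : Fin d → ℤ,
        (fun j => (q j : ℝ)) ∉ interior ((fun x => x + v) '' S)) ↔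
      (∀ j, ∃ z : ℤ, v j = (z : ℝ)) := by
  have ha0 : ∀ i, 0 < a i := fun i => one_pos.trans (ha i)
  obtain ⟨i₀, -⟩ := Finset.nonempty_of_sum_ne_zero (by rw [hsum]; exact one_ne_zero)
  have hvert : (fun i : Fin d => fun j => if j = i then a i else 0) =
      fun i => Pi.single i (a i) := by
    ext i j; simp [Pi.single_apply]
  have hint : interior S = {x | (∀ i, 0 < x i) ∧ sumDiv a x < 1} := by
    rw [hS, hvert, convexHull_insert_zero_range_single ha0,
      interior_setOf_nonneg_and_le (sumDiv_surjective (ha0 i₀).ne')]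
  intro v
  simp only [mem_interior_image_add_right, hint]
  constructor
  · intro h
    by_contra! ⟨j, hj⟩
    have hfract : Int.fract (v j) ≠ 0 := fun h0 =>
      (Int.fract_eq_zero_iff.mp h0).elim fun z hz => hj z hz.symm
    have hceil : (fun i => ((⌊v i⌋ + 1 : ℤ) : ℝ)) - v = fun i => 1 - Int.fract (v i) := by
      ext i; simp [← Int.self_sub_floor]; ring
    exact h (fun i => ⌊v i⌋ + 1) (hceil ▸ one_sub_fract_mem_of_sum_inv_eq_one ha0 hsum hfract)
  · intro hv q
    choose z hz using hv
    have hsub : (fun i => (q i : ℝ)) - v = fun i => ((q i - z i : ℤ) : ℝ) := by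
      ext i; simp [hz]
    rw [hsub]
    exact intCast_notMem_of_sum_inv_eq_one ha0 hsum _

/-- Let `d ≥ 2` and `a 1, …, a d > 1` be reals with `∑ 1/a i = 1`, and let
`S = conv({0, a 1 • e 1, …, a d • e d}) ⊂ ℝ^d`. Then for every `v ∈ ℝ^d`, the
translate `S + v` is lattice-free (its interior contains no integer point) if and
only if `v ∈ ℤ^d`. -/
theorem translate_lattice_free_iff_integral (d : ℕ) (hd : 2 ≤ d)
    (a : Fin d → ℝ) (ha : ∀ i, 1 < a i) (hsum : ∑ i, 1 / a i = 1)
    (S : Set (Fin d → ℝ))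
    (hS : S = convexHull ℝ (insert (0 : Fin d → ℝ)
      (Set.range (fun i : Fin d => fun j => if j = i then a i else 0)))) :
    ∀ v : Fin d → ℝ,
      (∀ q : Fin d → ℤ,
        (fun j => (q j : ℝ)) ∉ interior ((fun x => x + v) '' S)) ↔
      (∀ j, ∃ z : ℤ, v j = (z : ℝ)) :=
  translate_lattice_free_iff_integral_general d a ha hsum S hS
end

section
/- Let S ⊂ ℝ^d be a d-dimensional simplex with the origin in its interior. If β_1, ..., β_{d+1} are the barycentric coordinates of the origin with respect to the vertices of S, then β_1, ..., β_{d+1} are also the barycentric coordinates of the origin with respect to the vertices of the polar dual simplex S* (under the natural bijection between vertices of S* and facets of S, pairing each vertex v_i of S with the facet of S not containing v_i). -/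
/-! The vector `z = ∑ β i • w i` is orthogonal to every vertex: the pairing `⟪v j, w i⟫` is
symmetric in `i, j` (it is `1` off the diagonal), so `⟪v j, z⟫ = ⟪∑ β i • v i, w j⟫ = 0`.
The vertices of a `d`-simplex in `ℝ^d` affinely span the space, hence `z = 0`. -/

theorem eq_zero_of_affineSpan_eq_top_of_forall_inner_eq_zero {𝕜 E : Type*} [RCLike 𝕜]
    [NormedAddCommGroup E] [InnerProductSpace 𝕜 E] {s : Set E} {z : E}
    (hs : affineSpan 𝕜 s = ⊤) (hz : ∀ x ∈ s, inner 𝕜 z x = (0 : 𝕜)) : z = 0 := by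
  have hle : affineSpan 𝕜 s ≤ (𝕜 ∙ z)ᗮ.toAffineSubspace :=
    affineSpan_le.mpr fun x hx => Submodule.mem_orthogonal_singleton_iff_inner_right.mpr (hz x hx)
  have hzz : z ∈ (𝕜 ∙ z)ᗮ := hle (hs ▸ AffineSubspace.mem_top 𝕜 E z)
  exact inner_self_eq_zero.mp (Submodule.mem_orthogonal_singleton_iff_inner_right.mp hzz)

theorem inner_sum_smul_eq_inner_sum_smul_of_symm {ι E : Type*} [Fintype ι]
    [NormedAddCommGroup E] [InnerProductSpace ℝ E] {v w : ι → E} (β : ι → ℝ)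
    (hvw : ∀ i j, inner ℝ (v j) (w i) = inner ℝ (v i) (w j)) (j : ι) :
    inner ℝ (v j) (∑ i, β i • w i) = inner ℝ (∑ i, β i • v i) (w j) := by
  simp only [inner_sum, sum_inner, real_inner_smul_left, real_inner_smul_right, hvw]

theorem dual_same_barycentric_general (d : ℕ)
    (v w : Fin (d + 1) → EuclideanSpace ℝ (Fin d))
    (hind : AffineIndependent ℝ v)
    (β : Fin (d + 1) → ℝ)
    (hβbary : ∑ i, β i • v i = 0)
    (hw : ∀ i j : Fin (d + 1), j ≠ i → (inner ℝ (v j) (w i) : ℝ) = 1) :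
    ∑ i, β i • w i = 0 := by
  have hsymm : ∀ i j, inner ℝ (v j) (w i) = inner ℝ (v i) (w j) := by
    intro i j
    rcases eq_or_ne j i with rfl | hji
    · rfl
    · rw [hw i j hji, hw j i hji.symm]
  have hspan : affineSpan ℝ (Set.range v) = ⊤ :=
    hind.affineSpan_eq_top_iff_card_eq_finrank_add_one.mpr (by simp)
  refine eq_zero_of_affineSpan_eq_top_of_forall_inner_eq_zero hspan ?_
  rintro _ ⟨j, rfl⟩
  rw [real_inner_comm, inner_sum_smul_eq_inner_sum_smul_of_symm β hsymm, hβbary, inner_zero_left]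

/-- Let `S ⊂ ℝ^d` be a `d`-dimensional simplex with vertices `v i` and the origin
in its interior, with barycentric coordinates `β` of the origin, i.e.
`∑ β i • v i = 0`, `β i > 0`, `∑ β i = 1`. If `w i` are the vertices of the polar
dual simplex `S*` under the natural pairing (so that `⟪v j, w i⟫ = 1` for all
`j ≠ i`), then `β` are also the barycentric coordinates of the origin with
respect to `S*`, i.e. `∑ β i • w i = 0`. -/
theorem dual_same_barycentric (d : ℕ) (hd : 1 ≤ d)
    (v w : Fin (d + 1) → EuclideanSpace ℝ (Fin d))
    (hind : AffineIndependent ℝ v)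
    (β : Fin (d + 1) → ℝ) (hβpos : ∀ i, 0 < β i) (hβsum : ∑ i, β i = 1)
    (hβbary : ∑ i, β i • v i = 0)
    (hw : ∀ i j : Fin (d + 1), j ≠ i → (inner ℝ (v j) (w i) : ℝ) = 1) :
    ∑ i, β i • w i = 0 :=
  dual_same_barycentric_general d v w hind β hβbary hw
end
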